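/- arXiv:1502.05272 — 3 statements merged into one kernel-verified Lean document; each statement's English description precedes it below -/
import Mathlib

section
/- For self-adjoint matrices a, b ∈ M_n(ℂ), the distance between their unitary orbits, inf over unitaries u of ‖u a u* − b‖ (operator norm), equals the optimal matching distance min over permutations σ of max_i |α_i − β_{σ(i)}|, where α_1,…,α_n and β_1,…,β_n are the eigenvalues of a and b respectively. -/
open scoped Matrix.Norms.L2Operator

section WeylAux

open scoped InnerProductSpace
open Matrix

variable {n : ℕ}

private lemma weylAux_qf_eq (e : OrthonormalBasis (Fin n) ℂ (EuclideanSpace ℂ (Fin n)))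
    (T : EuclideanSpace ℂ (Fin n) →L[ℂ] EuclideanSpace ℂ (Fin n)) (α : Fin n → ℝ)
    (hT : ∀ j, T (e j) = (α j : ℂ) • e j) (v : EuclideanSpace ℂ (Fin n)) :
    (⟪T v, v⟫_ℂ).re = ∑ j, α j * ‖e.repr v j‖ ^ 2 := by
  have h1 : T v = ∑ j, ((α j : ℂ) * e.repr v j) • e j := by
    conv_lhs => rw [← e.sum_repr v]
    rw [map_sum]
    refine Finset.sum_congr rfl fun j _ => ?_
    rw [_root_.map_smul, hT, smul_smul, mul_comm]
  rw [h1, sum_inner, Complex.re_sum]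
  refine Finset.sum_congr rfl fun j _ => ?_
  rw [inner_smul_left, ← e.repr_apply_apply, _root_.map_mul, Complex.conj_ofReal, mul_assoc,
    RCLike.conj_mul]
  simp [Complex.mul_re]
  exact Or.inl (by rw [← Complex.ofReal_pow]; exact Complex.ofReal_re _)

private lemma weylAux_parseval (e : OrthonormalBasis (Fin n) ℂ (EuclideanSpace ℂ (Fin n)))
    (v : EuclideanSpace ℂ (Fin n)) : ‖v‖ ^ 2 = ∑ j, ‖e.repr v j‖ ^ 2 := by
  have h := weylAux_qf_eq e (ContinuousLinearMap.id ℂ _) (fun _ => 1) (fun j => by simp) v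
  simp only [ContinuousLinearMap.id_apply, one_mul] at h
  rw [← h, ← RCLike.re_to_complex]
  exact (inner_self_eq_norm_sq v).symm

private lemma weylAux_repr_eq_zero (e : OrthonormalBasis (Fin n) ℂ (EuclideanSpace ℂ (Fin n)))
    (S : Set (Fin n)) {v : EuclideanSpace ℂ (Fin n)}
    (hv : v ∈ Submodule.span ℂ (⇑e '' S)) {j : Fin n} (hj : j ∉ S) :
    e.repr v j = 0 := by
  induction hv using Submodule.span_induction with
  | mem x hx =>
    obtain ⟨i, hiS, rfl⟩ := hx
    rw [e.repr_self]
    have : j ≠ i := fun h => hj (h ▸ hiS)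
    simp [EuclideanSpace.single_apply, this]
  | zero => simp
  | add x y _ _ hx hy => simp [map_add, hx, hy]
  | smul c x _ hx => simp [_root_.map_smul, hx]

private lemma weylAux_finrank_span (e : OrthonormalBasis (Fin n) ℂ (EuclideanSpace ℂ (Fin n)))
    (S : Finset (Fin n)) :
    Module.finrank ℂ (Submodule.span ℂ (⇑e '' ↑S)) = S.card := by
  have hli : LinearIndependent ℂ (fun i : S => e i) :=
    e.orthonormal.linearIndependent.comp _ Subtype.val_injective
  have hr : Set.range (fun i : S => e i) = ⇑e '' ↑S := (Set.image_eq_range _ _).symm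
  rw [← hr, finrank_span_eq_card hli, Fintype.card_coe]

private lemma weylAux_key (T S : EuclideanSpace ℂ (Fin n) →L[ℂ] EuclideanSpace ℂ (Fin n))
    (e f : OrthonormalBasis (Fin n) ℂ (EuclideanSpace ℂ (Fin n))) (α β : Fin n → ℝ)
    (hT : ∀ j, T (e j) = (α j : ℂ) • e j) (hS : ∀ j, S (f j) = (β j : ℂ) • f j)
    (hα : Monotone α) (hβ : Monotone β) (k : Fin n) :
    α k - β k ≤ ‖T - S‖ := by
  set V := Submodule.span ℂ (⇑f '' ↑(Finset.Iic k)) with hV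
  set W := Submodule.span ℂ (⇑e '' ↑(Finset.Ici k)) with hW
  have hdimV : Module.finrank ℂ V = k + 1 := by rw [hV, weylAux_finrank_span, Fin.card_Iic]
  have hdimW : Module.finrank ℂ W = n - k := by rw [hW, weylAux_finrank_span, Fin.card_Ici]
  obtain ⟨v, hvVW, hv0⟩ : ∃ v, v ∈ V ⊓ W ∧ v ≠ 0 := by
    apply Submodule.exists_mem_ne_zero_of_ne_bot
    intro hbot
    have h1 := Submodule.finrank_sup_add_finrank_inf_eq V W
    rw [hbot, finrank_bot, hdimV, hdimW] at h1
    have h2 : Module.finrank ℂ (V ⊔ W : Submodule ℂ (EuclideanSpace ℂ (Fin n))) ≤ n :=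
      le_trans (Submodule.finrank_le _) (by simp)
    have hk : (k : ℕ) < n := k.isLt
    omega
  obtain ⟨hvV, hvW⟩ := hvVW
  have hv2 : (0:ℝ) < ‖v‖ ^ 2 := pow_pos (norm_pos_iff.mpr hv0) 2
  have hTv : α k * ‖v‖ ^ 2 ≤ (⟪T v, v⟫_ℂ).re := by
    rw [weylAux_qf_eq e T α hT v, weylAux_parseval e v, Finset.mul_sum]
    apply Finset.sum_le_sum
    intro j _
    by_cases hj : j ∈ Finset.Ici k
    · exact mul_le_mul_of_nonneg_right (hα (Finset.mem_Ici.mp hj)) (by positivity)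
    · rw [weylAux_repr_eq_zero e _ hvW (by simpa using hj)]; simp
  have hSv : (⟪S v, v⟫_ℂ).re ≤ β k * ‖v‖ ^ 2 := by
    rw [weylAux_qf_eq f S β hS v, weylAux_parseval f v, Finset.mul_sum]
    apply Finset.sum_le_sum
    intro j _
    by_cases hj : j ∈ Finset.Iic k
    · exact mul_le_mul_of_nonneg_right (hβ (Finset.mem_Iic.mp hj)) (by positivity)
    · rw [weylAux_repr_eq_zero f _ hvV (by simpa using hj)]; simp
  have hray : (⟪(T - S) v, v⟫_ℂ).re ≤ ‖T - S‖ * ‖v‖ ^ 2 := by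
    calc (⟪(T - S) v, v⟫_ℂ).re ≤ ‖⟪(T - S) v, v⟫_ℂ‖ := Complex.re_le_norm _
      _ ≤ ‖(T - S) v‖ * ‖v‖ := norm_inner_le_norm _ _
      _ ≤ (‖T - S‖ * ‖v‖) * ‖v‖ := mul_le_mul_of_nonneg_right ((T - S).le_opNorm v) (norm_nonneg _)
      _ = ‖T - S‖ * ‖v‖ ^ 2 := by ring
  have hsub : (⟪(T - S) v, v⟫_ℂ).re = (⟪T v, v⟫_ℂ).re - (⟪S v, v⟫_ℂ).re := by
    rw [ContinuousLinearMap.sub_apply, inner_sub_left]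
    simp
  rw [← sub_nonneg]
  have h3 : 0 ≤ (‖T - S‖ - (α k - β k)) * ‖v‖ ^ 2 := by nlinarith
  nlinarith

private lemma weylAux_exists_perm
    (T S : EuclideanSpace ℂ (Fin n) →L[ℂ] EuclideanSpace ℂ (Fin n))
    (e f : OrthonormalBasis (Fin n) ℂ (EuclideanSpace ℂ (Fin n))) (α β : Fin n → ℝ)
    (hT : ∀ j, T (e j) = (α j : ℂ) • e j) (hS : ∀ j, S (f j) = (β j : ℂ) • f j) :
    ∃ σ : Equiv.Perm (Fin n), ∀ i, |α i - β (σ i)| ≤ ‖T - S‖ := by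
  set τa := Tuple.sort α with hτa
  set τb := Tuple.sort β with hτb
  have hT' : ∀ j, T ((e.reindex τa.symm) j) = (((α ∘ τa) j : ℝ) : ℂ) • (e.reindex τa.symm) j := by
    intro j
    simp only [OrthonormalBasis.reindex_apply, Equiv.symm_symm, Function.comp_apply]
    exact hT (τa j)
  have hS' : ∀ j, S ((f.reindex τb.symm) j) = (((β ∘ τb) j : ℝ) : ℂ) • (f.reindex τb.symm) j := by
    intro j
    simp only [OrthonormalBasis.reindex_apply, Equiv.symm_symm, Function.comp_apply]
    exact hS (τb j)
  have hkey : ∀ k : Fin n, |α (τa k) - β (τb k)| ≤ ‖T - S‖ := by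
    intro k
    have h1 := weylAux_key T S (e.reindex τa.symm) (f.reindex τb.symm) (α ∘ τa) (β ∘ τb)
      hT' hS' (Tuple.monotone_sort α) (Tuple.monotone_sort β) k
    have h2 := weylAux_key S T (f.reindex τb.symm) (e.reindex τa.symm) (β ∘ τb) (α ∘ τa)
      hS' hT' (Tuple.monotone_sort β) (Tuple.monotone_sort α) k
    rw [norm_sub_rev] at h2
    exact abs_sub_le_iff.mpr ⟨h1, h2⟩
  refine ⟨τa.symm.trans τb, fun i => ?_⟩
  have h := hkey (τa.symm i)
  rw [Equiv.apply_symm_apply] at h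
  rw [Equiv.trans_apply]
  exact h

private lemma weylAux_clm_eigen {A : Matrix (Fin n) (Fin n) ℂ} (hA : A.IsHermitian) (j : Fin n) :
    Matrix.toEuclideanCLM (𝕜 := ℂ) A (hA.eigenvectorBasis j) =
      ((hA.eigenvalues j : ℂ)) • hA.eigenvectorBasis j := by
  apply (WithLp.equiv 2 (Fin n → ℂ)).injective
  rw [WithLp.equiv_apply, WithLp.equiv_apply, Matrix.ofLp_toEuclideanCLM]
  have h := hA.mulVec_eigenvectorBasis j
  rw [h]
  rw [RCLike.real_smul_eq_coe_smul (K := ℂ)]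
  rfl

private lemma weylAux_norm_clm_sub (A B : Matrix (Fin n) (Fin n) ℂ) :
    ‖Matrix.toEuclideanCLM (𝕜 := ℂ) A - Matrix.toEuclideanCLM (𝕜 := ℂ) B‖ = ‖A - B‖ := by
  rw [← map_sub]
  rfl

private lemma weylAux_clm_unitary {u : Matrix (Fin n) (Fin n) ℂ}
    (hu : u ∈ Matrix.unitaryGroup (Fin n) ℂ) :
    Matrix.toEuclideanCLM (𝕜 := ℂ) u ∈
      unitary (EuclideanSpace ℂ (Fin n) →L[ℂ] EuclideanSpace ℂ (Fin n)) := by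
  rw [Unitary.mem_iff]
  rw [Unitary.mem_iff] at hu
  constructor
  · rw [← map_star, ← _root_.map_mul, hu.1, _root_.map_one]
  · rw [← map_star, ← _root_.map_mul, hu.2, _root_.map_one]

private lemma weylAux_eigen_conj {a u : Matrix (Fin n) (Fin n) ℂ} (ha : a.IsHermitian)
    (hu : u ∈ Matrix.unitaryGroup (Fin n) ℂ) :
    ∃ e : OrthonormalBasis (Fin n) ℂ (EuclideanSpace ℂ (Fin n)), ∀ j,
      Matrix.toEuclideanCLM (𝕜 := ℂ) (u * a * star u) (e j) =
        ((ha.eigenvalues j : ℂ)) • e j := by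
  classical
  set U := Matrix.toEuclideanCLM (𝕜 := ℂ) u with hU
  have hUm := weylAux_clm_unitary hu
  let L := Unitary.linearIsometryEquiv (𝕜 := ℂ) ⟨U, hUm⟩
  refine ⟨(ha.eigenvectorBasis).map L, fun j => ?_⟩
  have hmap : ((ha.eigenvectorBasis).map L) j = U (ha.eigenvectorBasis j) := by
    rfl
  rw [hmap, _root_.map_mul, _root_.map_mul, map_star]
  have hstar : (star U) (U (ha.eigenvectorBasis j)) = ha.eigenvectorBasis j := by
    have h1 : star U * U = 1 := by
      rw [← map_star, ← _root_.map_mul, (Unitary.mem_iff.mp hu).1, _root_.map_one]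
    calc (star U) (U (ha.eigenvectorBasis j))
        = (star U * U) (ha.eigenvectorBasis j) := rfl
      _ = ha.eigenvectorBasis j := by rw [h1]; rfl
  calc (U * Matrix.toEuclideanCLM (𝕜 := ℂ) a * star U) (U (ha.eigenvectorBasis j))
      = U (Matrix.toEuclideanCLM (𝕜 := ℂ) a ((star U) (U (ha.eigenvectorBasis j)))) := rfl
    _ = U (Matrix.toEuclideanCLM (𝕜 := ℂ) a (ha.eigenvectorBasis j)) := by rw [hstar]
    _ = U (((ha.eigenvalues j : ℂ)) • ha.eigenvectorBasis j) := by
        rw [weylAux_clm_eigen ha j]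
    _ = ((ha.eigenvalues j : ℂ)) • U (ha.eigenvectorBasis j) := by rw [_root_.map_smul]

private lemma weylAux_perm_unitary (σ : Equiv.Perm (Fin n)) :
    ((1 : Matrix (Fin n) (Fin n) ℂ).submatrix id ⇑σ) ∈ Matrix.unitaryGroup (Fin n) ℂ := by
  rw [Matrix.mem_unitaryGroup_iff]
  have hstar : star ((1 : Matrix (Fin n) (Fin n) ℂ).submatrix id ⇑σ)
      = (1 : Matrix (Fin n) (Fin n) ℂ).submatrix ⇑σ id := by
    show ((1 : Matrix (Fin n) (Fin n) ℂ).submatrix id ⇑σ)ᴴ = _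
    rw [conjTranspose_submatrix, conjTranspose_one]
  rw [hstar, submatrix_mul_equiv (1 : Matrix (Fin n) (Fin n) ℂ) 1 id σ id, one_mul,
    submatrix_id_id]

private lemma weylAux_perm_conj (σ : Equiv.Perm (Fin n)) (d : Fin n → ℂ) :
    ((1 : Matrix (Fin n) (Fin n) ℂ).submatrix id ⇑σ) * Matrix.diagonal d *
      star ((1 : Matrix (Fin n) (Fin n) ℂ).submatrix id ⇑σ) =
      Matrix.diagonal (d ∘ ⇑σ.symm) := by
  have hstar : star ((1 : Matrix (Fin n) (Fin n) ℂ).submatrix id ⇑σ)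
      = (1 : Matrix (Fin n) (Fin n) ℂ).submatrix ⇑σ id := by
    show ((1 : Matrix (Fin n) (Fin n) ℂ).submatrix id ⇑σ)ᴴ = _
    rw [conjTranspose_submatrix, conjTranspose_one]
  rw [hstar]
  have hd : Matrix.diagonal d = (Matrix.diagonal (d ∘ ⇑σ.symm)).submatrix ⇑σ ⇑σ := by
    rw [submatrix_diagonal _ _ σ.injective]
    have : (d ∘ ⇑σ.symm) ∘ ⇑σ = d := by
      funext i
      simp only [Function.comp_apply, Equiv.symm_apply_apply]
    rw [this]
  rw [hd, submatrix_mul_equiv (1 : Matrix (Fin n) (Fin n) ℂ) _ id σ ⇑σ, one_mul,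
    submatrix_mul_equiv _ (1 : Matrix (Fin n) (Fin n) ℂ) id σ id, mul_one, submatrix_id_id]

private lemma weylAux_norm_diagonal_le (d : Fin n → ℂ) (M : ℝ) (hM : 0 ≤ M)
    (h : ∀ i, ‖d i‖ ≤ M) : ‖Matrix.diagonal d‖ ≤ M := by
  rw [Matrix.l2_opNorm_def]
  apply ContinuousLinearMap.opNorm_le_bound _ hM
  intro x
  have hTx : ∀ i, ((Matrix.toEuclideanLin ≪≫ₗ LinearMap.toContinuousLinearMap)
      (Matrix.diagonal d) x) i = d i * x i := by
    intro i
    show (Matrix.diagonal d *ᵥ _) i = _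
    rw [Matrix.mulVec_diagonal]
    rfl
  rw [EuclideanSpace.norm_eq, EuclideanSpace.norm_eq]
  rw [show M * Real.sqrt (∑ i, ‖x i‖ ^ 2) = Real.sqrt (M ^ 2 * ∑ i, ‖x i‖ ^ 2) by
    rw [Real.sqrt_mul (by positivity), Real.sqrt_sq hM]]
  apply Real.sqrt_le_sqrt
  rw [Finset.mul_sum]
  apply Finset.sum_le_sum
  intro i _
  rw [hTx i, norm_mul]
  have h1 := h i
  have h2 : (0:ℝ) ≤ ‖x i‖ := norm_nonneg _
  have h3 : (0:ℝ) ≤ ‖d i‖ := norm_nonneg _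
  rw [mul_pow]
  exact mul_le_mul_of_nonneg_right (by nlinarith) (by positivity)

private lemma weylAux_conj_formula {a : Matrix (Fin n) (Fin n) ℂ} (ha : a.IsHermitian)
    (σ : Equiv.Perm (Fin n)) (W : Matrix (Fin n) (Fin n) ℂ) (γ : Fin n → ℝ) :
    (W * ((1 : Matrix (Fin n) (Fin n) ℂ).submatrix id ⇑σ) * star (ha.eigenvectorUnitary : Matrix (Fin n) (Fin n) ℂ)) * a *
        star (W * ((1 : Matrix (Fin n) (Fin n) ℂ).submatrix id ⇑σ) * star (ha.eigenvectorUnitary : Matrix (Fin n) (Fin n) ℂ)) -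
        W * Matrix.diagonal (RCLike.ofReal ∘ γ) * star W =
      W * Matrix.diagonal ((RCLike.ofReal ∘ ha.eigenvalues ∘ ⇑σ.symm) - (RCLike.ofReal ∘ γ)) * star W := by
  set P := (1 : Matrix (Fin n) (Fin n) ℂ).submatrix id ⇑σ with hPdef
  have hstar : star (W * P * star (ha.eigenvectorUnitary : Matrix (Fin n) (Fin n) ℂ)) =
      (ha.eigenvectorUnitary : Matrix (Fin n) (Fin n) ℂ) * (star P * star W) := by
    rw [StarMul.star_mul, StarMul.star_mul, star_star]
  calc (W * P * star (ha.eigenvectorUnitary : Matrix (Fin n) (Fin n) ℂ)) * a *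
        star (W * P * star (ha.eigenvectorUnitary : Matrix (Fin n) (Fin n) ℂ)) -
        W * Matrix.diagonal (RCLike.ofReal ∘ γ) * star W
      = W * (P * (star (ha.eigenvectorUnitary : Matrix (Fin n) (Fin n) ℂ) * a *
          (ha.eigenvectorUnitary : Matrix (Fin n) (Fin n) ℂ)) * star P) * star W -
          W * Matrix.diagonal (RCLike.ofReal ∘ γ) * star W := by
        rw [hstar]; simp only [mul_assoc]
    _ = W * (P * Matrix.diagonal (RCLike.ofReal ∘ ha.eigenvalues) * star P) * star W -
          W * Matrix.diagonal (RCLike.ofReal ∘ γ) * star W := by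
        rw [← ha.conjStarAlgAut_star_eigenvectorUnitary, Unitary.conjStarAlgAut_apply, Unitary.coe_star,
          star_star]
    _ = W * Matrix.diagonal ((RCLike.ofReal ∘ ha.eigenvalues) ∘ ⇑σ.symm) * star W -
          W * Matrix.diagonal (RCLike.ofReal ∘ γ) * star W := by
        rw [hPdef, weylAux_perm_conj σ (RCLike.ofReal ∘ ha.eigenvalues)]
    _ = W * (Matrix.diagonal ((RCLike.ofReal ∘ ha.eigenvalues) ∘ ⇑σ.symm) -
          Matrix.diagonal (RCLike.ofReal ∘ γ)) * star W := by
        rw [Matrix.mul_sub, Matrix.sub_mul]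
    _ = W * Matrix.diagonal ((RCLike.ofReal ∘ ha.eigenvalues ∘ ⇑σ.symm) - (RCLike.ofReal ∘ γ)) * star W := by
        rw [Matrix.diagonal_sub]
        rfl

end WeylAux

/-- Weyl's theorem: for self-adjoint complex matrices, the distance between
unitary orbits (w.r.t. the operator norm) equals the optimal matching distance
between their eigenvalues. -/
theorem weyl_distance_unitary_orbits {n : ℕ} (a b : Matrix (Fin n) (Fin n) ℂ)
    (ha : a.IsHermitian) (hb : b.IsHermitian) :
    sInf {r : ℝ | ∃ u ∈ Matrix.unitaryGroup (Fin n) ℂ, r = ‖u * a * star u - b‖} =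
      ⨅ σ : Equiv.Perm (Fin n), ⨆ i, |ha.eigenvalues i - hb.eigenvalues (σ i)| := by
  classical
  rcases Nat.eq_zero_or_pos n with hn | hn
  · subst hn
    haveI : Subsingleton (Matrix (Fin 0) (Fin 0) ℂ) :=
      ⟨fun M N => by ext i j; exact i.elim0⟩
    have hset : {r : ℝ | ∃ u ∈ Matrix.unitaryGroup (Fin 0) ℂ, r = ‖u * a * star u - b‖}
        = {0} := by
      ext r
      simp only [Set.mem_setOf_eq, Set.mem_singleton_iff]
      constructor
      · rintro ⟨u, hu, rfl⟩
        rw [Subsingleton.elim (u * a * star u - b) 0, norm_zero]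
      · rintro rfl
        exact ⟨1, one_mem _, by rw [Subsingleton.elim (1 * a * star 1 - b) 0, norm_zero]⟩
    rw [hset, csInf_singleton]
    have h0 : ∀ σ : Equiv.Perm (Fin 0),
        (⨆ i : Fin 0, |ha.eigenvalues i - hb.eigenvalues (σ i)|) = 0 := fun σ =>
      Real.iSup_of_isEmpty _
    simp only [h0]
    exact (ciInf_const).symm
  · haveI : Nonempty (Fin n) := ⟨⟨0, hn⟩⟩
    have hbdd : BddBelow {r : ℝ | ∃ u ∈ Matrix.unitaryGroup (Fin n) ℂ,
        r = ‖u * a * star u - b‖} := ⟨0, by rintro r ⟨u, hu, rfl⟩; exact norm_nonneg _⟩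
    have hne : Set.Nonempty {r : ℝ | ∃ u ∈ Matrix.unitaryGroup (Fin n) ℂ,
        r = ‖u * a * star u - b‖} := ⟨‖1 * a * star 1 - b‖, 1, one_mem _, rfl⟩
    have hbddsup : ∀ σ : Equiv.Perm (Fin n),
        BddAbove (Set.range fun i => |ha.eigenvalues i - hb.eigenvalues (σ i)|) :=
      fun σ => Set.Finite.bddAbove (Set.finite_range _)
    apply le_antisymm
    · -- upper bound: sInf ≤ ⨅
      apply le_ciInf
      intro σ
      have hM0 : 0 ≤ ⨆ i, |ha.eigenvalues i - hb.eigenvalues (σ i)| :=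
        le_trans (abs_nonneg _) (le_ciSup (hbddsup σ) (Classical.arbitrary _))
      set u := (hb.eigenvectorUnitary : Matrix (Fin n) (Fin n) ℂ) *
        ((1 : Matrix (Fin n) (Fin n) ℂ).submatrix id ⇑σ) *
        star (ha.eigenvectorUnitary : Matrix (Fin n) (Fin n) ℂ) with hu_def
      have humem : u ∈ Matrix.unitaryGroup (Fin n) ℂ :=
        mul_mem (mul_mem hb.eigenvectorUnitary.2 (weylAux_perm_unitary σ))
          (Unitary.star_mem ha.eigenvectorUnitary.2)
      have h := weylAux_conj_formula ha σ
        (hb.eigenvectorUnitary : Matrix (Fin n) (Fin n) ℂ) hb.eigenvalues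
      rw [← Unitary.conjStarAlgAut_apply (S := ℂ) hb.eigenvectorUnitary
        (Matrix.diagonal (RCLike.ofReal ∘ hb.eigenvalues)), ← hb.spectral_theorem] at h
      refine le_trans (csInf_le hbdd ⟨u, humem, rfl⟩) ?_
      rw [hu_def, h]
      have hnorm : ∀ d : Fin n → ℂ, ‖(hb.eigenvectorUnitary : Matrix (Fin n) (Fin n) ℂ) *
          Matrix.diagonal d * star (hb.eigenvectorUnitary : Matrix (Fin n) (Fin n) ℂ)‖ =
          ‖Matrix.diagonal d‖ := by
        intro d
        rw [show star (hb.eigenvectorUnitary : Matrix (Fin n) (Fin n) ℂ) =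
          ((star hb.eigenvectorUnitary : Matrix.unitaryGroup (Fin n) ℂ) :
            Matrix (Fin n) (Fin n) ℂ) from rfl]
        rw [CStarRing.norm_mul_coe_unitary, CStarRing.norm_coe_unitary_mul]
      rw [hnorm]
      apply weylAux_norm_diagonal_le _ _ hM0
      intro i
      simp only [Pi.sub_apply, Function.comp_apply]
      rw [← RCLike.ofReal_sub, RCLike.norm_ofReal]
      have heq : |ha.eigenvalues (σ.symm i) - hb.eigenvalues i| =
          |ha.eigenvalues (σ.symm i) - hb.eigenvalues (σ (σ.symm i))| := by
        rw [Equiv.apply_symm_apply]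
      rw [heq]
      exact le_ciSup (hbddsup σ) (σ.symm i)
    · -- lower bound: ⨅ ≤ sInf
      apply le_csInf hne
      rintro r ⟨u, hu, rfl⟩
      obtain ⟨e', he'⟩ := weylAux_eigen_conj ha hu
      obtain ⟨σ, hσ⟩ := weylAux_exists_perm
        (Matrix.toEuclideanCLM (𝕜 := ℂ) (u * a * star u)) (Matrix.toEuclideanCLM (𝕜 := ℂ) b)
        e' hb.eigenvectorBasis ha.eigenvalues hb.eigenvalues he' (weylAux_clm_eigen hb)
      rw [weylAux_norm_clm_sub] at hσ
      refine le_trans (ciInf_le (Set.Finite.bddBelow (Set.finite_range _)) σ) ?_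
      exact ciSup_le fun i => hσ i
end

section
/- Let a, b be positive contractions in M_n(ℂ) with eigenvalues α_1 ≤ … ≤ α_n and β_1 ≤ … ≤ β_n in ascending order. Then for r > 0, the condition 'for all t > 0, rank((a − t − r)_+) ≤ rank((b − t)_+) and rank((b − t − r)_+) ≤ rank((a − t)_+)' holds if and only if max_i |α_i − β_i| ≤ r. -/
open scoped Matrix.Norms.L2Operator ComplexOrder

/-- The positive part `(a - s)₊` of a Hermitian matrix `a`, computed via its spectral
decomposition. -/
noncomputable def cutM {n : ℕ} (s : ℝ) {a : Matrix (Fin n) (Fin n) ℂ}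
    (ha : a.IsHermitian) : Matrix (Fin n) (Fin n) ℂ :=
  (ha.eigenvectorUnitary : Matrix (Fin n) (Fin n) ℂ) *
    Matrix.diagonal (fun i => ((max (ha.eigenvalues i - s) 0 : ℝ) : ℂ)) *
    star (ha.eigenvectorUnitary : Matrix (Fin n) (Fin n) ℂ)

/-
Both ranks count eigenvalues above a threshold (conjugating by the eigenvector unitary does not
change rank), so the statement is about two ascending sequences `α`, `β`. If `α i - β i > r`,
any `t` with `β i < t < α i - r` (positive since `β ≥ 0`) gives
`#{β > t} ≤ #(Ioi i) < #(Ici i) ≤ #{α > t + r}` by monotonicity. Conversely, `|α i - β i| ≤ r`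
for all `i` makes `{α > t + r} ⊆ {β > t}` and vice versa.
-/

open Finset

section Counting

variable {ι : Type*} [Fintype ι] {α β : ι → ℝ}

lemma card_filter_le_of_forall_sub_le {r : ℝ} (h : ∀ i, α i - β i ≤ r) (t : ℝ) :
    #{j | t + r < α j} ≤ #{j | t < β j} :=
  card_le_card fun j hj => by
    simp only [mem_filter, mem_univ, true_and] at hj ⊢
    linarith [h j]

variable [LinearOrder ι] [LocallyFiniteOrderTop ι]

lemma card_filter_lt_lt_of_monotone (hα : Monotone α) (hβ : Monotone β) {i : ι} {s t : ℝ}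
    (hβt : β i ≤ t) (hsα : s < α i) : #{j | t < β j} < #{j | s < α j} := by
  have hβ_sub : ({j | t < β j} : Finset ι) ⊆ Ioi i := fun j hj => by
    simp only [mem_filter, mem_univ, true_and] at hj
    exact mem_Ioi.2 (lt_of_not_ge fun hji => (hj.trans_le (hβ hji)).not_ge hβt)
  have hα_sup : Ici i ⊆ ({j | s < α j} : Finset ι) := fun j hj => by
    simpa using hsα.trans_le (hα (mem_Ici.1 hj))
  calc #{j | t < β j} ≤ #(Ioi i) := card_le_card hβ_sub
    _ < #(Ici i) := card_lt_card (by rw [Ici_eq_cons_Ioi]; exact ssubset_cons _)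
    _ ≤ #{j | s < α j} := card_le_card hα_sup

lemma sub_le_of_forall_card_filter_le (hα : Monotone α) (hβ : Monotone β) (hβ0 : ∀ i, 0 ≤ β i)
    {r : ℝ} (H : ∀ t, 0 < t → #{j | t + r < α j} ≤ #{j | t < β j}) (i : ι) :
    α i - β i ≤ r := by
  by_contra! hgap
  obtain ⟨t, hβt, htα⟩ : ∃ t, β i < t ∧ t + r < α i :=
    ⟨(β i + (α i - r)) / 2, by linarith, by linarith⟩
  exact (H t ((hβ0 i).trans_lt hβt)).not_gt
    (card_filter_lt_lt_of_monotone (i := i) hα hβ hβt.le htα)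

theorem forall_card_filter_le_iff_iSup_abs_sub_le (hα : Monotone α) (hβ : Monotone β)
    (hα0 : ∀ i, 0 ≤ α i) (hβ0 : ∀ i, 0 ≤ β i) {r : ℝ} (hr : 0 ≤ r) :
    (∀ t, 0 < t → #{j | t + r < α j} ≤ #{j | t < β j} ∧ #{j | t + r < β j} ≤ #{j | t < α j}) ↔
      ⨆ i, |α i - β i| ≤ r := by
  constructor
  · intro H
    refine Real.iSup_le (fun i => abs_sub_le_iff.2 ⟨?_, ?_⟩) hr
    · exact sub_le_of_forall_card_filter_le hα hβ hβ0 (fun t ht => (H t ht).1) i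
    · exact sub_le_of_forall_card_filter_le hβ hα hα0 (fun t ht => (H t ht).2) i
  · intro H t _
    have habs (i : ι) : |α i - β i| ≤ r :=
      (le_ciSup (Set.finite_range _).bddAbove i).trans H
    exact ⟨card_filter_le_of_forall_sub_le (fun i => (abs_sub_le_iff.1 (habs i)).1) t,
      card_filter_le_of_forall_sub_le (fun i => (abs_sub_le_iff.1 (habs i)).2) t⟩

end Counting

lemma card_filter_comp_perm {ι : Type*} [Fintype ι] (σ : Equiv.Perm ι) (p : ι → Prop)
    [DecidablePred p] : #{i | p (σ i)} = #{i | p i} :=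
  card_equiv σ (by simp)

lemma rank_cutM {n : ℕ} (s : ℝ) {a : Matrix (Fin n) (Fin n) ℂ} (ha : a.IsHermitian) :
    (cutM s ha).rank = #{i | s < ha.eigenvalues i} := by
  rw [cutM, ← Unitary.coe_star,
    Matrix.rank_mul_eq_left_of_isUnit_det _ _ (Matrix.UnitaryGroup.det_isUnit _),
    Matrix.rank_mul_eq_right_of_isUnit_det _ _ (Matrix.UnitaryGroup.det_isUnit _),
    Matrix.rank_diagonal, Fintype.card_subtype]
  simp only [ne_eq, Complex.ofReal_eq_zero, sup_eq_right, not_le, sub_pos]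

lemma rank_cutM_eq_card_filter {n : ℕ} (s : ℝ) {a : Matrix (Fin n) (Fin n) ℂ}
    (ha : a.IsHermitian) {α : Fin n → ℝ} (σ : Equiv.Perm (Fin n))
    (hσ : ∀ i, α i = ha.eigenvalues (σ i)) :
    (cutM s ha).rank = #{i | s < α i} := by
  simp only [rank_cutM, hσ, card_filter_comp_perm σ (fun i => s < ha.eigenvalues i)]

theorem rank_comparison_iff_ordered_matching_general {n : ℕ} (a b : Matrix (Fin n) (Fin n) ℂ)
    (ha : a.PosSemidef) (hb : b.PosSemidef)
    (α β : Fin n → ℝ) (hαmono : Monotone α) (hβmono : Monotone β)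
    (hα : ∃ σ : Equiv.Perm (Fin n), ∀ i, α i = ha.isHermitian.eigenvalues (σ i))
    (hβ : ∃ σ : Equiv.Perm (Fin n), ∀ i, β i = hb.isHermitian.eigenvalues (σ i))
    (r : ℝ) (hr : 0 < r) :
    (∀ t : ℝ, 0 < t → (cutM (t + r) ha.isHermitian).rank ≤ (cutM t hb.isHermitian).rank ∧
        (cutM (t + r) hb.isHermitian).rank ≤ (cutM t ha.isHermitian).rank) ↔
      (⨆ i, |α i - β i|) ≤ r := by
  obtain ⟨σa, hσa⟩ := hα
  obtain ⟨σb, hσb⟩ := hβ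
  have hα0 (i : Fin n) : 0 ≤ α i := hσa i ▸ ha.eigenvalues_nonneg (σa i)
  have hβ0 (i : Fin n) : 0 ≤ β i := hσb i ▸ hb.eigenvalues_nonneg (σb i)
  simp only [rank_cutM_eq_card_filter _ _ σa hσa, rank_cutM_eq_card_filter _ _ σb hσb]
  exact forall_card_filter_le_iff_iSup_abs_sub_le hαmono hβmono hα0 hβ0 hr.le

/-- For positive contractions in `Mₙ(ℂ)` with eigenvalues listed in ascending order,
the rank comparison condition defining `d_W(a,b) ≤ r` holds if and only if
`max_i |α_i - β_i| ≤ r`. -/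
theorem rank_comparison_iff_ordered_matching {n : ℕ} (a b : Matrix (Fin n) (Fin n) ℂ)
    (ha : a.PosSemidef) (hb : b.PosSemidef) (ha1 : ‖a‖ ≤ 1) (hb1 : ‖b‖ ≤ 1)
    (α β : Fin n → ℝ) (hαmono : Monotone α) (hβmono : Monotone β)
    (hα : ∃ σ : Equiv.Perm (Fin n), ∀ i, α i = ha.isHermitian.eigenvalues (σ i))
    (hβ : ∃ σ : Equiv.Perm (Fin n), ∀ i, β i = hb.isHermitian.eigenvalues (σ i))
    (r : ℝ) (hr : 0 < r) :
    (∀ t : ℝ, 0 < t → (cutM (t + r) ha.isHermitian).rank ≤ (cutM t hb.isHermitian).rank ∧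
        (cutM (t + r) hb.isHermitian).rank ≤ (cutM t ha.isHermitian).rank) ↔
      (⨆ i, |α i - β i|) ≤ r :=
  rank_comparison_iff_ordered_matching_general a b ha hb α β hαmono hβmono hα hβ r hr
end

section
/- Let A = lim_→ A_n be a sequential inductive limit of C*-algebras with injective connecting maps such that in each A_n the pseudometrics d_U and d_W agree on positive elements. Then for positive elements a, b in the dense union ∪_n A_n ⊆ A, d_U^A(a, b) ≤ d_W^{A_n}(a, b) whenever a, b ∈ A_n; consequently, using d_W^A ≤ d_U^A ≤ d_U computed in any subalgebra and continuity of d_U, d_W with respect to the norm, d_U = d_W on all positive elements of A. -/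
open Filter Topology

/-- The distance between unitary orbits. -/
noncomputable def dU {A : Type*} [CStarAlgebra A] (a b : A) : ℝ :=
  sInf {r : ℝ | ∃ u ∈ unitary A, r = ‖u * a * star u - b‖}

/-- `cut t a = (a - t)₊`, the positive part of `a - t·1`. -/
noncomputable def cut {A : Type*} [CStarAlgebra A] (t : ℝ) (a : A) : A :=
  cfc (fun x : ℝ => max (x - t) 0) a

/-- Cuntz subequivalence (within the algebra). -/
def CuntzLE {A : Type*} [CStarAlgebra A] (a b : A) : Prop :=
  ∃ v : ℕ → A, Tendsto (fun k => ‖a - v k * b * star (v k)‖) atTop (𝓝 0)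

/-- The Cuntz pseudometric `d_W`. -/
noncomputable def dW {A : Type*} [CStarAlgebra A] (a b : A) : ℝ :=
  sInf {r : ℝ | 0 < r ∧ ∀ t : ℝ, 0 < t →
    CuntzLE (cut (t + r) a) (cut t b) ∧ CuntzLE (cut (t + r) b) (cut t a)}

/-!
`d_W ≤ d_U` in any C*-algebra: if `‖u a u* - b‖ ≤ r` then `(a - t - r - σ)₊` is Cuntz below
`(b - t)₊`, and conjugating by `u` costs nothing. `d_U` can only drop along a *-homomorphism,
which gives `d_U^A ≤ d_U^{A_n} = d_W^{A_n}` on `A_n`.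

For the converse take positive `a, b ∈ A` and `r` slightly above `d_W(a, b)`, so that `a, b` are
`CutComparable r`. Positive `a', b'` in the union close to `a, b` are `CutComparable (r + 4δ)`.
Each Cuntz subequivalence in `A` is witnessed up to `δ` by a conjugator from the dense union, and
since cut-downs vanish beyond `‖a'‖, ‖b'‖`, thresholds `t` on a finite `δ`-grid suffice. The
finitely many conjugators lie in a single `A_m`, where `a', b'` are `CutComparable (r + 7δ)`; hence
`d_U^A(a', b') ≤ d_W^{A_m}(a', b') ≤ r + 7δ`, and `d_U` is 1-Lipschitz in each variable.
-/

open scoped CStarAlgebra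

section CFC

variable {A : Type*} [CStarAlgebra A]

lemma cfc_mul_mul_cfc {a : A} {f g : ℝ → ℝ} (hf : ContinuousOn f (spectrum ℝ a))
    (hg : ContinuousOn g (spectrum ℝ a)) :
    cfc f a * cfc g a * cfc f a = cfc (fun x => f x * g x * f x) a := by
  rw [← cfc_mul f g a, ← cfc_mul (fun x => f x * g x) f a (hf.mul hg) hf]

lemma cut_isSelfAdjoint (t : ℝ) (a : A) : IsSelfAdjoint (cut t a) :=
  cfc_predicate _ a

lemma cut_cut {a : A} (ha : IsSelfAdjoint a) {s : ℝ} (hs : 0 ≤ s) (t : ℝ) :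
    cut s (cut t a) = cut (s + t) a := by
  rw [cut, cut, ← cfc_comp _ _ a]
  refine cfc_congr fun x _ => ?_
  simp only [Function.comp_apply, max_def]
  split_ifs <;> linarith

lemma cut_eq_zero {a : A} {t : ℝ} (ht : ‖a‖ ≤ t) : cut t a = 0 := by
  nontriviality A
  rw [cut, cfc_congr (g := 0) fun x hx => ?_, cfc_zero]
  have := (Real.le_norm_self x).trans (spectrum.norm_le_norm_of_mem hx)
  exact max_eq_right (by linarith)

lemma map_cut {F B : Type*} [CStarAlgebra B] [FunLike F A B] [AlgHomClass F ℂ A B]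
    [StarHomClass F A B] (φ : F) {a : A} (ha : IsSelfAdjoint a) (t : ℝ) :
    φ (cut t a) = cut t (φ a) :=
  StarAlgHomClass.map_cfc φ (fun x : ℝ => max (x - t) 0) a (hφa := ha.map φ)

lemma cut_unitary_conj {u : A} (hu : u ∈ unitary A) {a : A} (ha : IsSelfAdjoint a) (t : ℝ) :
    cut t (u * a * star u) = u * cut t a * star u :=
  (map_cut (Unitary.conjStarAlgAut ℂ A ⟨u, hu⟩) ha t).symm

end CFC

section Order

variable {A : Type*} [CStarAlgebra A] [PartialOrder A] [StarOrderedRing A]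

lemma cut_nonneg (t : ℝ) (a : A) : 0 ≤ cut t a :=
  cfc_nonneg fun _ _ => le_max_right _ _

lemma cut_antitone (a : A) : Antitone fun t : ℝ => cut t a :=
  fun _ _ hst => cfc_mono fun _ _ => max_le_max (by linarith) le_rfl

lemma le_cut_add_algebraMap {a : A} (ha : IsSelfAdjoint a) (t : ℝ) :
    a ≤ cut t a + algebraMap ℝ A t := by
  calc a = cfc (fun x : ℝ => x) a := (cfc_id' ℝ a).symm
    _ ≤ cfc (fun x => max (x - t) 0 + t) a :=
      cfc_mono fun x _ => by linarith [le_max_left (x - t) 0]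
    _ = cut t a + algebraMap ℝ A t := by
      rw [cfc_add (a := a) (fun x => max (x - t) 0) (fun _ => t), cfc_const t a]
      rfl

lemma le_add_algebraMap_of_norm_sub_le {a b : A} (ha : IsSelfAdjoint a) (hb : IsSelfAdjoint b)
    {δ : ℝ} (h : ‖a - b‖ ≤ δ) : a ≤ b + algebraMap ℝ A δ := by
  have hnorm : algebraMap ℝ A ‖a - b‖ ≤ algebraMap ℝ A δ := by
    rw [← sub_nonneg, ← map_sub, Algebra.algebraMap_eq_smul_one]
    exact smul_nonneg (sub_nonneg.2 h) zero_le_one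
  calc a = b + (a - b) := by abel
    _ ≤ b + algebraMap ℝ A δ := by gcongr; exact (ha.sub hb).le_algebraMap_norm_self.trans hnorm

lemma Dense.exists_star_mul_self_near {S : Set A} (hS : Dense S) {a : A} (ha : 0 ≤ a) {δ : ℝ}
    (hδ : 0 < δ) : ∃ z ∈ S, ‖star z * z - a‖ < δ :=
  hS.exists_mem_open (U := {z | ‖star z * z - a‖ < δ}) (isOpen_lt (by fun_prop) continuous_const)
    ⟨CFC.sqrt a, by
      simpa [(CFC.sqrt_nonneg a).isSelfAdjoint.star_eq, CFC.sqrt_mul_sqrt_self a ha] using hδ⟩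

end Order

section Cuntz

variable {A : Type*} [CStarAlgebra A]

lemma cuntzLE_iff {a b : A} : CuntzLE a b ↔ ∀ δ > 0, ∃ v : A, ‖a - v * b * star v‖ < δ := by
  constructor
  · rintro ⟨v, hv⟩ δ hδ
    obtain ⟨k, hk⟩ := (hv.eventually (gt_mem_nhds hδ)).exists
    exact ⟨v k, hk⟩
  · intro h
    choose v hv using fun n : ℕ => h (1 / (n + 1)) Nat.one_div_pos_of_nat
    exact ⟨v, squeeze_zero (fun _ => norm_nonneg _) (fun n => (hv n).le)
      tendsto_one_div_add_atTop_nhds_zero_nat⟩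

lemma CuntzLE.zero (b : A) : CuntzLE 0 b :=
  ⟨fun _ => 0, by simp⟩

lemma cuntzLE_conj (v b : A) : CuntzLE (v * b * star v) b :=
  ⟨fun _ => v, by simp⟩

lemma CuntzLE.trans {a b c : A} (hab : CuntzLE a b) (hbc : CuntzLE b c) : CuntzLE a c := by
  obtain ⟨w, hw⟩ := hbc
  have hw' : Tendsto (fun k => w k * c * star (w k)) atTop (𝓝 b) :=
    tendsto_iff_norm_sub_tendsto_zero.2 (by simpa only [norm_sub_rev] using hw)
  refine cuntzLE_iff.2 fun δ hδ => ?_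
  obtain ⟨v, hv⟩ := cuntzLE_iff.1 hab δ hδ
  have hlim : Tendsto (fun k => ‖a - v * (w k * c * star (w k)) * star v‖) atTop
      (𝓝 ‖a - v * b * star v‖) :=
    ((tendsto_const_nhds.sub ((tendsto_const_nhds.mul hw').mul tendsto_const_nhds))).norm
  obtain ⟨k, hk⟩ := (hlim.eventually (gt_mem_nhds hv)).exists
  exact ⟨v * w k, by simpa only [star_mul, mul_assoc] using hk⟩

lemma CuntzLE.exists_mem_of_dense {c d : A} (h : CuntzLE c d) {S : Set A} (hS : Dense S)
    {ε : ℝ} (hε : 0 < ε) : ∃ w ∈ S, ‖c - w * d * star w‖ < ε :=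
  hS.exists_mem_open (U := {w | ‖c - w * d * star w‖ < ε})
    (isOpen_lt (by fun_prop) continuous_const) (cuntzLE_iff.1 h ε hε)

variable [PartialOrder A] [StarOrderedRing A]

lemma exists_conj_eq_one_sub_mul_self_and_norm_le {b : A} (hb : 0 ≤ b) {ε : ℝ} (hε : 0 < ε) :
    ∃ z s : A, IsSelfAdjoint z ∧ IsSelfAdjoint s ∧ z * b * z = 1 - s * s ∧ ‖s * b * s‖ ≤ ε := by
  have hpos : ∀ x ∈ spectrum ℝ b, 0 < x + ε := fun x hx => by
    linarith [spectrum_nonneg_of_nonneg hb hx]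
  set f := fun x : ℝ => (√(x + ε))⁻¹ with hf_def
  set g := fun x : ℝ => √(ε / (x + ε)) with hg_def
  have hf : ContinuousOn f (spectrum ℝ b) :=
    ContinuousOn.inv₀ (by fun_prop) fun x hx => (Real.sqrt_pos.2 (hpos x hx)).ne'
  have hg : ContinuousOn g (spectrum ℝ b) :=
    (continuousOn_const.div (by fun_prop) fun x hx => (hpos x hx).ne').sqrt
  refine ⟨cfc f b, cfc g b, cfc_predicate f b, cfc_predicate g b, ?_, ?_⟩
  · have hconj := cfc_mul_mul_cfc hf (continuousOn_id (s := spectrum ℝ b))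
    rw [cfc_id ℝ b] at hconj
    rw [hconj, ← cfc_mul g g b hg hg, ← cfc_const_one ℝ b, ← cfc_sub _ _ b]
    refine cfc_congr fun x hx => ?_
    have hx := hpos x hx
    simp only [hf_def, hg_def, id]
    rw [Real.mul_self_sqrt (by positivity), mul_right_comm, ← mul_inv,
      Real.mul_self_sqrt hx.le, eq_sub_iff_add_eq, inv_mul_eq_div, ← add_div,
      div_self hx.ne']
  · have hconj := cfc_mul_mul_cfc hg (continuousOn_id (s := spectrum ℝ b))
    rw [cfc_id ℝ b] at hconj
    rw [hconj]
    refine norm_cfc_le hε.le fun x hx => ?_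
    have hx0 := spectrum_nonneg_of_nonneg hb hx
    simp only [hg_def, id]
    rw [mul_right_comm, Real.mul_self_sqrt (by positivity),
      Real.norm_of_nonneg (by positivity), div_mul_eq_mul_div, div_le_iff₀ (hpos x hx)]
    nlinarith

lemma CuntzLE.of_le {a b : A} (ha : 0 ≤ a) (hab : a ≤ b) : CuntzLE a b := by
  refine cuntzLE_iff.2 fun δ hδ => ?_
  obtain ⟨ε, hε, hεδ⟩ := exists_between hδ
  obtain ⟨z, s, hz, hs, hzbz, hsbs⟩ :=
    exists_conj_eq_one_sub_mul_self_and_norm_le (ha.trans hab) hε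
  set r := CFC.sqrt a
  have hr : IsSelfAdjoint r := (CFC.sqrt_nonneg a).isSelfAdjoint
  have hrr : r * r = a := CFC.sqrt_mul_sqrt_self a ha
  have hdiff : a - r * z * b * star (r * z) = star (s * r) * (s * r) := by
    calc a - r * z * b * star (r * z) = r * r - r * (z * b * z) * r := by
          rw [hrr, star_mul, hz.star_eq, hr.star_eq]; noncomm_ring
      _ = star (s * r) * (s * r) := by
          rw [hzbz, star_mul, hs.star_eq, hr.star_eq]; noncomm_ring
  refine ⟨r * z, lt_of_le_of_lt ?_ hεδ⟩
  calc ‖a - r * z * b * star (r * z)‖ = ‖s * a * s‖ := by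
        rw [hdiff, CStarRing.norm_star_mul_self, ← CStarRing.norm_self_mul_star, star_mul,
          hs.star_eq, hr.star_eq, ← hrr]
        congr 1; noncomm_ring
    _ ≤ ‖s * b * s‖ := CStarAlgebra.norm_le_norm_of_nonneg_of_le (hs.conjugate_nonneg ha)
        (hs.conjugate_le_conjugate hab)
    _ ≤ ε := hsbs

lemma cuntzLE_cut_of_le {a : A} {s t : ℝ} (hst : s ≤ t) : CuntzLE (cut t a) (cut s a) :=
  .of_le (cut_nonneg t a) (cut_antitone a hst)

lemma cuntzLE_cut_of_le_add_algebraMap {a b : A} (ha : IsSelfAdjoint a) {δ σ : ℝ} (hσ : 0 < σ)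
    (hab : a ≤ b + algebraMap ℝ A δ) : CuntzLE (cut (δ + σ) a) b := by
  set g := fun x : ℝ => √(max (x - (δ + σ)) 0 / σ) with hg_def
  have hg : ContinuousOn g (spectrum ℝ a) := by rw [hg_def]; fun_prop
  have hsub : a - algebraMap ℝ A δ = cfc (fun x => x - δ) a := by
    rw [cfc_sub (fun x => x) (fun _ => δ) a, cfc_id' ℝ a, cfc_const δ a]
  -- `(x - δ - σ)₊ ≤ g(x)² (x - δ)`, so `cut (δ + σ) a ≤ g(a) (a - δ) g(a) ≤ g(a) b g(a)`
  have hcut : cut (δ + σ) a ≤ cfc g a * (a - algebraMap ℝ A δ) * cfc g a := by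
    rw [hsub, cfc_mul_mul_cfc hg (by fun_prop), cut]
    refine cfc_mono (fun x _ => ?_) (by fun_prop) ((hg.mul (by fun_prop)).mul hg)
    simp only [hg_def]
    rw [mul_right_comm, Real.mul_self_sqrt (div_nonneg (le_max_right _ _) hσ.le)]
    rcases le_total x (δ + σ) with hx | hx
    · simp [max_eq_right (sub_nonpos.2 hx)]
    · rw [max_eq_left (sub_nonneg.2 hx), div_mul_eq_mul_div, le_div_iff₀ hσ]
      nlinarith
  have hg' : IsSelfAdjoint (cfc g a) := cfc_predicate g a
  have hconj : cfc g a * (a - algebraMap ℝ A δ) * cfc g a ≤ cfc g a * b * star (cfc g a) := by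
    rw [hg'.star_eq]
    exact hg'.conjugate_le_conjugate (sub_le_iff_le_add.2 hab)
  exact (CuntzLE.of_le (cut_nonneg _ _) (hcut.trans hconj)).trans (cuntzLE_conj _ b)

lemma cuntzLE_cut_of_norm_sub_le {a b : A} (ha : IsSelfAdjoint a) (hb : IsSelfAdjoint b)
    {δ σ : ℝ} (h : ‖a - b‖ ≤ δ) (t : ℝ) (hσ : 0 < σ) :
    CuntzLE (cut (t + (δ + σ)) a) (cut t b) := by
  have hab : a ≤ cut t b + algebraMap ℝ A (t + δ) :=
    calc a ≤ b + algebraMap ℝ A δ := le_add_algebraMap_of_norm_sub_le ha hb h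
      _ ≤ cut t b + algebraMap ℝ A t + algebraMap ℝ A δ := by
          gcongr; exact le_cut_add_algebraMap hb t
      _ = cut t b + algebraMap ℝ A (t + δ) := by rw [map_add, add_assoc]
  simpa only [add_assoc] using cuntzLE_cut_of_le_add_algebraMap ha hσ hab

lemma cuntzLE_cut_of_norm_sub_conj_le {c d w : A} (hc : IsSelfAdjoint c) (hd : 0 ≤ d)
    {θ σ : ℝ} (h : ‖c - w * d * star w‖ ≤ θ) (hσ : 0 < σ) : CuntzLE (cut (θ + σ) c) d := by
  have hwd : 0 ≤ w * d * star w := star_right_conjugate_nonneg hd w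
  exact (cuntzLE_cut_of_le_add_algebraMap hc hσ
    (le_add_algebraMap_of_norm_sub_le hc hwd.isSelfAdjoint h)).trans (cuntzLE_conj w d)

lemma cuntzLE_cut_of_grid {x y : A} {R η : ℝ} {K : ℕ} (hR : 0 ≤ R) (hη : 0 < η)
    (hx : ‖x‖ ≤ K * η)
    (h : ∀ k < K, CuntzLE (cut ((k + 1) * η + R) x) (cut ((k + 1) * η) y)) {t : ℝ} (ht : 0 ≤ t) :
    CuntzLE (cut (t + (R + η)) x) (cut t y) := by
  set k := ⌊t / η⌋₊
  have hk : k * η ≤ t := (le_div_iff₀ hη).1 (Nat.floor_le (by positivity))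
  have hk' : t < (k + 1) * η := (div_lt_iff₀ hη).1 (Nat.lt_floor_add_one _)
  rcases lt_or_ge k K with hkK | hKk
  · exact (cuntzLE_cut_of_le (by linarith)).trans ((h k hkK).trans (cuntzLE_cut_of_le hk'.le))
  · have : (K : ℝ) * η ≤ k * η := by gcongr
    rw [cut_eq_zero (by linarith)]
    exact .zero _

end Cuntz

section UnitaryDistance

variable {A : Type*} [CStarAlgebra A]

lemma dU_le_norm (a b : A) {u : A} (hu : u ∈ unitary A) : dU a b ≤ ‖u * a * star u - b‖ :=
  csInf_le ⟨0, by rintro _ ⟨v, -, rfl⟩; exact norm_nonneg _⟩ ⟨u, hu, rfl⟩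

lemma le_dU {a b : A} {r : ℝ} (h : ∀ u ∈ unitary A, r ≤ ‖u * a * star u - b‖) : r ≤ dU a b :=
  le_csInf ⟨_, 1, one_mem _, rfl⟩ (by rintro _ ⟨u, hu, rfl⟩; exact h u hu)

lemma dU_le_dU_add_norm_sub (a b a' b' : A) :
    dU a b ≤ dU a' b' + (‖a - a'‖ + ‖b - b'‖) := by
  rw [← sub_le_iff_le_add]
  refine le_dU fun u hu => sub_le_iff_le_add.2 ((dU_le_norm a b hu).trans ?_)
  have hconj : ‖u * (a - a') * star u‖ = ‖a - a'‖ := by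
    rw [CStarRing.norm_mul_mem_unitary _ (Unitary.star_mem hu),
      CStarRing.norm_mem_unitary_mul _ hu]
  calc ‖u * a * star u - b‖
      = ‖(u * a' * star u - b') + (u * (a - a') * star u + (b' - b))‖ := by
        congr 1; noncomm_ring
    _ ≤ ‖u * a' * star u - b'‖ + (‖u * (a - a') * star u‖ + ‖b' - b‖) :=
        (norm_add_le _ _).trans (by gcongr; exact norm_add_le _ _)
    _ = ‖u * a' * star u - b'‖ + (‖a - a'‖ + ‖b - b'‖) := by rw [hconj, norm_sub_rev b' b]

end UnitaryDistance

section Hom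

variable {A B F : Type*} [CStarAlgebra A] [CStarAlgebra B] [FunLike F B A]
  [AlgHomClass F ℂ B A] [StarHomClass F B A]

lemma dU_map_le (φ : F) (x y : B) : dU (φ x) (φ y) ≤ dU x y :=
  le_dU fun u hu => calc
    dU (φ x) (φ y) ≤ ‖φ u * φ x * star (φ u) - φ y‖ := dU_le_norm _ _ (Unitary.map_mem φ hu)
    _ = ‖φ (u * x * star u - y)‖ := by rw [map_sub, map_mul, map_mul, map_star]
    _ ≤ ‖u * x * star u - y‖ := NonUnitalStarAlgHom.norm_apply_le φ _

variable [PartialOrder B] [StarOrderedRing B]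

lemma cuntzLE_cut_of_map (φ : F) (hφ : Function.Injective φ) {x y w : B} (hx : IsSelfAdjoint x)
    (hy : IsSelfAdjoint y) {s t θ σ : ℝ} (hσ : 0 < σ)
    (h : ‖cut s (φ x) - φ w * cut t (φ y) * star (φ w)‖ ≤ θ) :
    CuntzLE (cut (s + (θ + σ)) x) (cut t y) := by
  have hθ : 0 ≤ θ := (norm_nonneg _).trans h
  rw [← map_cut φ hx, ← map_cut φ hy, ← map_star, ← map_mul, ← map_mul, ← map_sub,
    NonUnitalStarAlgHom.norm_map φ hφ] at h
  rw [add_comm s, ← cut_cut hx (by positivity)]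
  exact cuntzLE_cut_of_norm_sub_conj_le (cut_isSelfAdjoint s x) (cut_nonneg t y) h hσ

lemma cuntzLE_cut_of_map_grid (φ : F) (hφ : Function.Injective φ) {x y : B}
    (hx : IsSelfAdjoint x) (hy : IsSelfAdjoint y) {R η : ℝ} {K : ℕ} (hR : 0 ≤ R) (hη : 0 < η)
    (hxK : ‖x‖ ≤ K * η)
    (h : ∀ k < K, ∃ w : B,
      ‖cut ((k + 1) * η + R) (φ x) - φ w * cut ((k + 1) * η) (φ y) * star (φ w)‖ ≤ η)
    {t : ℝ} (ht : 0 ≤ t) : CuntzLE (cut (t + (R + 3 * η)) x) (cut t y) := by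
  rw [show R + 3 * η = R + 2 * η + η by ring]
  refine cuntzLE_cut_of_grid (by positivity) hη hxK (fun k hk => ?_) ht
  obtain ⟨w, hw⟩ := h k hk
  rw [show ((k : ℝ) + 1) * η + (R + 2 * η) = (k + 1) * η + R + (η + η) by ring]
  exact cuntzLE_cut_of_map φ hφ hx hy hη hw

variable [PartialOrder A] [StarOrderedRing A]

lemma nonneg_of_map_nonneg (φ : F) (hφ : Function.Injective φ) {x : B} (hx : 0 ≤ φ x) :
    0 ≤ x := by
  have hsa : IsSelfAdjoint x := hφ <| by rw [map_star, hx.isSelfAdjoint.star_eq]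
  rw [StarOrderedRing.nonneg_iff_spectrum_nonneg (R := ℝ) x hsa, ← hsa.map_spectrum_real φ hφ]
  exact fun r hr => spectrum_nonneg_of_nonneg hx hr

end Hom

section CutComparable

variable {A : Type*} [CStarAlgebra A]

def CutComparable (r : ℝ) (a b : A) : Prop :=
  ∀ t : ℝ, 0 < t → CuntzLE (cut (t + r) a) (cut t b) ∧ CuntzLE (cut (t + r) b) (cut t a)

lemma dW_le_of_cutComparable {a b : A} {r : ℝ} (hr : 0 < r) (h : CutComparable r a b) :
    dW a b ≤ r :=
  csInf_le ⟨0, fun _ hs => hs.1.le⟩ ⟨hr, h⟩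

lemma cutComparable_of_norm_le {a b : A} {r : ℝ} (ha : ‖a‖ ≤ r) (hb : ‖b‖ ≤ r) :
    CutComparable r a b := fun t ht => by
  rw [cut_eq_zero (by linarith : ‖a‖ ≤ t + r), cut_eq_zero (by linarith : ‖b‖ ≤ t + r)]
  exact ⟨.zero _, .zero _⟩

lemma exists_cutComparable_lt_dW_add (a b : A) {ε : ℝ} (hε : 0 < ε) :
    ∃ r, 0 < r ∧ CutComparable r a b ∧ r < dW a b + ε := by
  obtain ⟨r, ⟨hr, h⟩, hlt⟩ := exists_lt_of_csInf_lt (s := {r | 0 < r ∧ CutComparable r a b})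
    ⟨‖a‖ + ‖b‖ + 1, by positivity, cutComparable_of_norm_le (by linarith [norm_nonneg b])
      (by linarith [norm_nonneg a])⟩ (lt_add_of_pos_right (dW a b) hε)
  exact ⟨r, hr, h, hlt⟩

lemma CutComparable.of_unitary_conj {u a b : A} (hu : u ∈ unitary A) (ha : IsSelfAdjoint a)
    {r : ℝ} (h : CutComparable r (u * a * star u) b) : CutComparable r a b := by
  have hconj : ∀ s, cut s (u * a * star u) = u * cut s a * star u := cut_unitary_conj hu ha
  have hback : ∀ s, CuntzLE (cut s a) (cut s (u * a * star u)) := fun s => by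
    have hcancel : star u * (u * cut s a * star u) * star (star u) = cut s a :=
      calc star u * (u * cut s a * star u) * star (star u)
          = star u * u * cut s a * (star u * u) := by rw [star_star]; noncomm_ring
        _ = cut s a := by rw [Unitary.star_mul_self_of_mem hu, one_mul, mul_one]
    simpa only [hconj, hcancel] using cuntzLE_conj (star u) (cut s (u * a * star u))
  intro t ht
  refine ⟨(hback _).trans (h t ht).1, (h t ht).2.trans ?_⟩
  rw [hconj]
  exact cuntzLE_conj u _

variable [PartialOrder A] [StarOrderedRing A]

lemma cutComparable_of_norm_sub_le {a b : A} (ha : IsSelfAdjoint a) (hb : IsSelfAdjoint b)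
    {δ σ : ℝ} (h : ‖a - b‖ ≤ δ) (hσ : 0 < σ) : CutComparable (δ + σ) a b := fun t _ =>
  ⟨cuntzLE_cut_of_norm_sub_le ha hb h t hσ,
    cuntzLE_cut_of_norm_sub_le hb ha (by rwa [norm_sub_rev]) t hσ⟩

lemma dW_le_dU {a b : A} (ha : IsSelfAdjoint a) (hb : IsSelfAdjoint b) : dW a b ≤ dU a b :=
  le_dU fun u hu => le_of_forall_pos_le_add fun σ hσ => dW_le_of_cutComparable (by positivity)
    ((cutComparable_of_norm_sub_le (ha.conjugate u) hb le_rfl hσ).of_unitary_conj hu ha)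

lemma CutComparable.of_norm_sub_le {a b a' b' : A} {r δ σ : ℝ} (h : CutComparable r a b)
    (ha : IsSelfAdjoint a) (hb : IsSelfAdjoint b) (ha' : IsSelfAdjoint a')
    (hb' : IsSelfAdjoint b') (haa' : ‖a' - a‖ ≤ δ) (hbb' : ‖b' - b‖ ≤ δ) (hσ : 0 < σ) :
    CutComparable (r + 2 * (δ + σ)) a' b' := by
  intro t ht
  have hs : 0 < t + (δ + σ) := by linarith [(norm_nonneg _).trans haa']
  rw [show t + (r + 2 * (δ + σ)) = t + (δ + σ) + r + (δ + σ) by ring]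
  exact ⟨(cuntzLE_cut_of_norm_sub_le ha' ha haa' _ hσ).trans <| (h _ hs).1.trans <|
      cuntzLE_cut_of_norm_sub_le hb hb' (by rwa [norm_sub_rev]) t hσ,
    (cuntzLE_cut_of_norm_sub_le hb' hb hbb' _ hσ).trans <| (h _ hs).2.trans <|
      cuntzLE_cut_of_norm_sub_le ha ha' (by rwa [norm_sub_rev]) t hσ⟩

end CutComparable

section InductiveLimit

variable {A : Type*} [CStarAlgebra A] [PartialOrder A] [StarOrderedRing A] {B : ℕ → Type*}
  [∀ n, CStarAlgebra (B n)] (ι : ∀ n, B n →⋆ₐ[ℂ] A)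

lemma exists_nonneg_mem_iUnion_range_near (hdense : Dense (⋃ n, Set.range (ι n))) {a : A}
    (ha : 0 ≤ a) {δ : ℝ} (hδ : 0 < δ) : ∃ a' ∈ ⋃ n, Set.range (ι n), 0 ≤ a' ∧ ‖a' - a‖ < δ := by
  obtain ⟨z, hz, hza⟩ := hdense.exists_star_mul_self_near ha hδ
  obtain ⟨n, u, rfl⟩ := Set.mem_iUnion.1 hz
  exact ⟨ι n (star u * u), Set.mem_iUnion.2 ⟨n, _, rfl⟩,
    by rw [map_mul, map_star]; exact star_mul_self_nonneg _, by rwa [map_mul, map_star]⟩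

lemma exists_level_cutComparable [∀ n, PartialOrder (B n)] [∀ n, StarOrderedRing (B n)]
    (hι : ∀ n, Function.Injective (ι n)) (hmono : Monotone fun n => Set.range (ι n))
    (hdense : Dense (⋃ n, Set.range (ι n))) {a b : A} (ha : a ∈ ⋃ n, Set.range (ι n))
    (hb : b ∈ ⋃ n, Set.range (ι n)) (ha₀ : 0 ≤ a) (hb₀ : 0 ≤ b) {R η : ℝ} (hR : 0 ≤ R)
    (hη : 0 < η) (h : CutComparable R a b) :
    ∃ m, ∃ x y : B m, 0 ≤ x ∧ 0 ≤ y ∧ ι m x = a ∧ ι m y = b ∧ CutComparable (R + 3 * η) x y := by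
  classical
  have ht : ∀ k : ℕ, 0 < ((k : ℝ) + 1) * η := fun k => by positivity
  choose w₁ hw₁ hw₁η using fun k : ℕ => (h _ (ht k)).1.exists_mem_of_dense hdense hη
  choose w₂ hw₂ hw₂η using fun k : ℕ => (h _ (ht k)).2.exists_mem_of_dense hdense hη
  set K := ⌈max ‖a‖ ‖b‖ / η⌉₊
  -- thresholds beyond `K η ≥ ‖a‖, ‖b‖` need no conjugator, so a single level contains them all
  obtain ⟨m, hm⟩ := hmono.directed_le.exists_mem_subset_of_finset_subset_biUnion
    (s := insert a (insert b ((Finset.range K).image w₁ ∪ (Finset.range K).image w₂))) (by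
      intro z hz
      simp only [Finset.coe_insert, Finset.coe_union, Finset.coe_image, Set.mem_insert_iff,
        Set.mem_union, Set.mem_image] at hz
      rcases hz with rfl | rfl | ⟨k, -, rfl⟩ | ⟨k, -, rfl⟩
      exacts [ha, hb, hw₁ k, hw₂ k])
  simp only [Finset.coe_insert, Finset.coe_union, Finset.coe_image, Set.insert_subset_iff,
    Set.union_subset_iff, Set.image_subset_iff] at hm
  obtain ⟨⟨x, rfl⟩, ⟨y, rfl⟩, hm₁, hm₂⟩ := hm
  have hx := nonneg_of_map_nonneg (ι m) (hι m) ha₀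
  have hy := nonneg_of_map_nonneg (ι m) (hι m) hb₀
  have hK : ∀ z : B m, ‖ι m z‖ ≤ max ‖ι m x‖ ‖ι m y‖ → ‖z‖ ≤ K * η := fun z hz => by
    rw [← NonUnitalStarAlgHom.norm_map (ι m) (hι m) z, ← div_le_iff₀ hη]
    exact (div_le_div_of_nonneg_right hz hη.le).trans (Nat.le_ceil _)
  refine ⟨m, x, y, hx, hy, rfl, rfl, fun t ht => ⟨?_, ?_⟩⟩
  · refine cuntzLE_cut_of_map_grid (ι m) (hι m) hx.isSelfAdjoint hy.isSelfAdjoint hR hη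
      (hK x (le_max_left _ _)) (fun k hk => ?_) ht.le
    obtain ⟨ω, hω⟩ := hm₁ (Finset.mem_coe.2 (Finset.mem_range.2 hk))
    exact ⟨ω, by rw [hω]; exact (hw₁η k).le⟩
  · refine cuntzLE_cut_of_map_grid (ι m) (hι m) hy.isSelfAdjoint hx.isSelfAdjoint hR hη
      (hK y (le_max_right _ _)) (fun k hk => ?_) ht.le
    obtain ⟨ω, hω⟩ := hm₂ (Finset.mem_coe.2 (Finset.mem_range.2 hk))
    exact ⟨ω, by rw [hω]; exact (hw₂η k).le⟩

end InductiveLimit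

/-- If `A` is a sequential inductive limit of C*-algebras `B n` (modelled by isometric
unital embeddings with increasing ranges and dense union) in each of which `d_U = d_W`
on positive elements, then `d_U(a,b) ≤ d_W^{B n}(a,b)` for positive `a, b ∈ B n`, and
consequently `d_U = d_W` on all positive elements of `A`. -/
theorem dU_eq_dW_of_inductive_limit (A : Type) [CStarAlgebra A] [PartialOrder A]
    [StarOrderedRing A] (B : ℕ → Type) [∀ n, CStarAlgebra (B n)]
    [∀ n, PartialOrder (B n)] [∀ n, StarOrderedRing (B n)]
    (ι : ∀ n, B n →⋆ₐ[ℂ] A) (hisom : ∀ n, Isometry (ι n))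
    (hmono : ∀ n, Set.range (ι n) ⊆ Set.range (ι (n + 1)))
    (hdense : Dense (⋃ n, Set.range (ι n)))
    (hBn : ∀ n, ∀ x y : B n, 0 ≤ x → 0 ≤ y → dU x y = dW x y) :
    (∀ n, ∀ x y : B n, 0 ≤ x → 0 ≤ y → dU (ι n x) (ι n y) ≤ dW x y) ∧
    (∀ a b : A, 0 ≤ a → 0 ≤ b → dU a b = dW a b) := by
  have hι : ∀ n, Function.Injective (ι n) := fun n => (hisom n).injective
  have hU : ∀ n, ∀ x y : B n, 0 ≤ x → 0 ≤ y → dU (ι n x) (ι n y) ≤ dW x y :=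
    fun n x y hx hy => (dU_map_le (ι n) x y).trans_eq (hBn n x y hx hy)
  refine ⟨hU, fun a b ha hb => le_antisymm ?_ (dW_le_dU ha.isSelfAdjoint hb.isSelfAdjoint)⟩
  refine le_of_forall_pos_le_add fun ε hε => ?_
  set δ := ε / 10 with hδ_def
  have hδ : 0 < δ := by positivity
  obtain ⟨r, hr, hab, hrε⟩ := exists_cutComparable_lt_dW_add a b hδ
  obtain ⟨a', ha'U, ha', haa'⟩ := exists_nonneg_mem_iUnion_range_near ι hdense ha hδ
  obtain ⟨b', hb'U, hb', hbb'⟩ := exists_nonneg_mem_iUnion_range_near ι hdense hb hδ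
  have hab' := hab.of_norm_sub_le ha.isSelfAdjoint hb.isSelfAdjoint ha'.isSelfAdjoint
    hb'.isSelfAdjoint haa'.le hbb'.le hδ
  obtain ⟨m, x, y, hx, hy, rfl, rfl, hxy⟩ := exists_level_cutComparable ι hι
    (monotone_nat_of_le_succ hmono) hdense ha'U hb'U ha' hb' (by positivity) hδ hab'
  calc dU a b ≤ dU (ι m x) (ι m y) + (‖a - ι m x‖ + ‖b - ι m y‖) := dU_le_dU_add_norm_sub ..
    _ ≤ dW x y + (δ + δ) := by
        gcongr
        · exact hU m x y hx hy
        · rw [norm_sub_rev]; exact haa'.le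
        · rw [norm_sub_rev]; exact hbb'.le
    _ ≤ r + 2 * (δ + δ) + 3 * δ + (δ + δ) := by
        gcongr; exact dW_le_of_cutComparable (by positivity) hxy
    _ ≤ dW a b + ε := by linarith
end
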